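/- Let M be a non-negative random variable and let κ ∈ (1,2]. Suppose there exist constants 0 < c ≤ C and s₀ > 0 such that c·s^{−κ} ≤ P(M > s) ≤ C·s^{−κ} for all s ≥ s₀. Let p = κ/2. Then there exist constants 0 < c' ≤ C' and a₀ > 1 such that for all a ≥ a₀: c'·a^{p−κ}·log a ≤ E[ (M²/(a+M))^p ] ≤ C'·a^{p−κ}·log a. -/

import Mathlib

/-!
With `κ = 2p`, the integrand `(M²/(a+M))^p` lies between `(2a)^{-p} min(M,a)^κ` and
`a^{-p} min(M,a)^κ + ((M-a)⁺)^p`. By the layer-cake formula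
`E[min(M,a)^κ] = κ ∫₀^a P(M > t) t^{κ-1} dt`, and on `[s₀, a]` the tail bounds make the integrand
comparable to `1/t`, which produces the factor `log a`. The excess term is `O(a^{p-κ})` because
`p < κ`, so it is absorbed into `a^{p-κ} log a`.
-/

open MeasureTheory Real Set
open scoped ENNReal

noncomputable def phi {Ω : Type*} [MeasurableSpace Ω] (μ : Measure Ω) (M : Ω → ℝ) (p a : ℝ) :
    ℝ≥0∞ :=
  ∫⁻ ω, ENNReal.ofReal ((M ω ^ 2 / (a + M ω)) ^ p) ∂μ

lemma setLIntegral_Ioc_ofReal_rpow {b r : ℝ} (hb : 0 ≤ b) (hr : -1 < r) :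
    ∫⁻ t in Ioc 0 b, ENNReal.ofReal (t ^ r) = ENNReal.ofReal (b ^ (r + 1) / (r + 1)) := by
  have hint : IntegrableOn (fun t : ℝ => t ^ r) (Ioc 0 b) :=
    (intervalIntegral.intervalIntegrable_rpow' hr).1
  rw [← ofReal_integral_eq_lintegral_ofReal hint
    (ae_restrict_of_forall_mem measurableSet_Ioc fun t ht => rpow_nonneg ht.1.le r),
    ← intervalIntegral.integral_of_le hb, integral_rpow (Or.inl hr), zero_rpow (by linarith),
    sub_zero]

lemma setLIntegral_Ioi_ofReal_rpow {b r : ℝ} (hb : 0 < b) (hr : r < -1) :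
    ∫⁻ t in Ioi b, ENNReal.ofReal (t ^ r) = ENNReal.ofReal (-b ^ (r + 1) / (r + 1)) := by
  rw [← ofReal_integral_eq_lintegral_ofReal (integrableOn_Ioi_rpow_of_lt hr hb)
    (ae_restrict_of_forall_mem measurableSet_Ioi fun t ht => rpow_nonneg (hb.trans ht).le r),
    integral_Ioi_rpow_of_lt hr hb]

lemma setLIntegral_Ioo_ofReal_mul_inv {b d K : ℝ} (hb : 0 < b) (hbd : b ≤ d) (hK : 0 ≤ K) :
    ∫⁻ t in Ioo b d, ENNReal.ofReal (K * t⁻¹) = ENNReal.ofReal (K * (log d - log b)) := by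
  have hint : IntegrableOn (fun t : ℝ => K * t⁻¹) (Ioc b d) :=
    ((continuousOn_const.mul (continuousOn_inv₀.mono fun t ht => (hb.trans_le ht.1).ne')
      ).integrableOn_Icc).mono_set Ioc_subset_Icc_self
  rw [Measure.restrict_congr_set Ioo_ae_eq_Ioc, ← ofReal_integral_eq_lintegral_ofReal hint
    (ae_restrict_of_forall_mem measurableSet_Ioc fun t ht =>
      mul_nonneg hK (inv_nonneg.2 (hb.trans ht.1).le)),
    ← intervalIntegral.integral_of_le hbd, intervalIntegral.integral_const_mul,
    integral_inv_of_pos hb (hb.trans_le hbd), log_div (hb.trans_le hbd).ne' hb.ne']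

lemma rpow_neg_mul_rpow_sub_one {t : ℝ} (ht : 0 < t) (κ : ℝ) : t ^ (-κ) * t ^ (κ - 1) = t⁻¹ := by
  rw [← rpow_add ht, show -κ + (κ - 1) = -1 by ring, rpow_neg_one]

lemma sq_rpow {x : ℝ} (hx : 0 ≤ x) (p : ℝ) : (x ^ 2) ^ p = x ^ (2 * p) := by
  exact_mod_cast (rpow_natCast_mul hx 2 p).symm

lemma le_sq_div_add_rpow {m a p : ℝ} (hm : 0 ≤ m) (ha : 0 < a) (hp : 0 ≤ p) :
    (2 * a) ^ (-p) * min m a ^ (2 * p) ≤ (m ^ 2 / (a + m)) ^ p := by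
  have key : min m a ^ 2 / (2 * a) ≤ m ^ 2 / (a + m) := by
    rw [div_le_div_iff₀ (by positivity) (by positivity)]
    rcases le_total m a with h | h
    · rw [min_eq_left h]; nlinarith
    · rw [min_eq_right h]
      nlinarith [mul_nonneg (mul_nonneg ha.le (by linarith : 0 ≤ 2 * m + a)) (sub_nonneg.2 h)]
  calc (2 * a) ^ (-p) * min m a ^ (2 * p) = (min m a ^ 2 / (2 * a)) ^ p := by
        rw [div_rpow (sq_nonneg _) (by positivity), sq_rpow (le_min hm ha.le),
          rpow_neg (by positivity), inv_mul_eq_div]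
    _ ≤ (m ^ 2 / (a + m)) ^ p := rpow_le_rpow (by positivity) key hp

lemma sq_div_add_rpow_le {m a p : ℝ} (hm : 0 ≤ m) (ha : 0 < a) (hp0 : 0 ≤ p)
    (hp1 : p ≤ 1) :
    (m ^ 2 / (a + m)) ^ p ≤ a ^ (-p) * min m a ^ (2 * p) + max (m - a) 0 ^ p := by
  rcases le_total m a with h | h
  · refine le_add_of_le_of_nonneg ?_ (rpow_nonneg (le_max_right _ _) p)
    calc (m ^ 2 / (a + m)) ^ p ≤ (m ^ 2 / a) ^ p := by
          gcongr
          linarith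
      _ = a ^ (-p) * min m a ^ (2 * p) := by
          rw [div_rpow (sq_nonneg _) ha.le, sq_rpow hm, min_eq_left h, rpow_neg ha.le,
            inv_mul_eq_div]
  · calc (m ^ 2 / (a + m)) ^ p ≤ m ^ p := by
          refine rpow_le_rpow (by positivity) ?_ hp0
          rw [div_le_iff₀ (by positivity)]; nlinarith
      _ ≤ a ^ p + (m - a) ^ p := by
          simpa using rpow_add_le_add_rpow ha.le (sub_nonneg.2 h) hp0 hp1
      _ = a ^ (-p) * min m a ^ (2 * p) + max (m - a) 0 ^ p := by
          rw [min_eq_right h, max_eq_left (sub_nonneg.2 h), ← rpow_add ha]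
          ring_nf

lemma log_le_two_mul_log_sub_log {s a : ℝ} (hs : 0 < s) (ha : s ^ 2 ≤ a) :
    log a ≤ 2 * (log a - log s) := by
  have h := log_le_log (by positivity) ha
  rw [log_pow, Nat.cast_ofNat] at h
  linarith

section LayerCake

variable {Ω : Type*} [MeasurableSpace Ω] (μ : Measure Ω) {M : Ω → ℝ}

lemma lintegral_ofReal_min_rpow (hM : AEMeasurable M μ) (hnn : 0 ≤ᵐ[μ] M) {a r : ℝ} (ha : 0 < a)
    (hr : 0 < r) :
    ∫⁻ ω, ENNReal.ofReal (min (M ω) a ^ r) ∂μ =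
      ENNReal.ofReal r * ∫⁻ t in Ioo 0 a, μ {ω | t < M ω} * ENNReal.ofReal (t ^ (r - 1)) := by
  have hvanish : ∫⁻ t in Ici a, μ {ω | t < min (M ω) a} * ENNReal.ofReal (t ^ (r - 1)) = 0 := by
    refine (setLIntegral_congr_fun measurableSet_Ici fun t ht => ?_).trans lintegral_zero
    have hempty : {ω | t < min (M ω) a} = ∅ :=
      eq_empty_of_forall_notMem fun ω (hω : t < min (M ω) a) =>
        (min_le_right _ _).not_gt (ht.trans_lt hω)
    rw [hempty, measure_empty, zero_mul]
  rw [lintegral_rpow_eq_lintegral_meas_lt_mul μ (hnn.mono fun ω h => le_min h ha.le)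
      (hM.min aemeasurable_const) hr, ← Ioo_union_Ici_eq_Ioi ha,
    lintegral_union measurableSet_Ici ((Iio_disjoint_Ici le_rfl).mono_left Ioo_subset_Iio_self),
    hvanish, add_zero]
  congr 1
  refine setLIntegral_congr_fun measurableSet_Ioo fun t ht => ?_
  simp only [lt_min_iff, ht.2, and_true]

lemma lintegral_ofReal_min_rpow_le [IsProbabilityMeasure μ] (hM : AEMeasurable M μ)
    (hnn : 0 ≤ᵐ[μ] M) {κ C s₀ a : ℝ} (hκ : 0 < κ) (hC : 0 ≤ C) (hs₀ : 0 < s₀) (hs₀a : s₀ < a)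
    (htail : ∀ s, s₀ ≤ s → μ {ω | s < M ω} ≤ ENNReal.ofReal (C * s ^ (-κ))) :
    ∫⁻ ω, ENNReal.ofReal (min (M ω) a ^ κ) ∂μ ≤
      ENNReal.ofReal (s₀ ^ κ + κ * C * (log a - log s₀)) := by
  have hhead : ∫⁻ t in Ioc 0 s₀, μ {ω | t < M ω} * ENNReal.ofReal (t ^ (κ - 1)) ≤
      ENNReal.ofReal (s₀ ^ κ / κ) :=
    calc ∫⁻ t in Ioc 0 s₀, μ {ω | t < M ω} * ENNReal.ofReal (t ^ (κ - 1))
        ≤ ∫⁻ t in Ioc 0 s₀, ENNReal.ofReal (t ^ (κ - 1)) :=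
          lintegral_mono fun t => mul_le_of_le_one_left' prob_le_one
      _ = ENNReal.ofReal (s₀ ^ κ / κ) := by
          rw [setLIntegral_Ioc_ofReal_rpow hs₀.le (by linarith), sub_add_cancel]
  have hbody : ∫⁻ t in Ioo s₀ a, μ {ω | t < M ω} * ENNReal.ofReal (t ^ (κ - 1)) ≤
      ENNReal.ofReal (C * (log a - log s₀)) :=
    calc ∫⁻ t in Ioo s₀ a, μ {ω | t < M ω} * ENNReal.ofReal (t ^ (κ - 1))
        ≤ ∫⁻ t in Ioo s₀ a, ENNReal.ofReal (C * t⁻¹) := by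
          refine setLIntegral_mono' measurableSet_Ioo fun t ht => ?_
          have ht0 : 0 < t := hs₀.trans ht.1
          calc μ {ω | t < M ω} * ENNReal.ofReal (t ^ (κ - 1))
              ≤ ENNReal.ofReal (C * t ^ (-κ)) * ENNReal.ofReal (t ^ (κ - 1)) := by
                gcongr; exact htail t ht.1.le
            _ = ENNReal.ofReal (C * t⁻¹) := by
                rw [← ENNReal.ofReal_mul (by positivity), mul_assoc,
                  rpow_neg_mul_rpow_sub_one ht0]
      _ = ENNReal.ofReal (C * (log a - log s₀)) :=
          setLIntegral_Ioo_ofReal_mul_inv hs₀ hs₀a.le hC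
  have hlog : 0 ≤ log a - log s₀ := sub_nonneg.2 (log_le_log hs₀ hs₀a.le)
  rw [lintegral_ofReal_min_rpow μ hM hnn (hs₀.trans hs₀a) hκ, ← Ioc_union_Ioo_eq_Ioo hs₀.le hs₀a,
    lintegral_union measurableSet_Ioo ((Ioc_disjoint_Ioi le_rfl).mono_right Ioo_subset_Ioi_self)]
  calc _ ≤ ENNReal.ofReal κ *
        (ENNReal.ofReal (s₀ ^ κ / κ) + ENNReal.ofReal (C * (log a - log s₀))) := by
        gcongr
    _ = ENNReal.ofReal (s₀ ^ κ + κ * C * (log a - log s₀)) := by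
        rw [← ENNReal.ofReal_add (by positivity) (by positivity), ← ENNReal.ofReal_mul hκ.le]
        congr 1
        field_simp

lemma ofReal_le_lintegral_ofReal_min_rpow (hM : AEMeasurable M μ) (hnn : 0 ≤ᵐ[μ] M)
    {κ c s₀ a : ℝ} (hκ : 0 < κ) (hc : 0 ≤ c) (hs₀ : 0 < s₀) (hs₀a : s₀ < a)
    (htail : ∀ s, s₀ ≤ s → ENNReal.ofReal (c * s ^ (-κ)) ≤ μ {ω | s < M ω}) :
    ENNReal.ofReal (κ * c * (log a - log s₀)) ≤ ∫⁻ ω, ENNReal.ofReal (min (M ω) a ^ κ) ∂μ := by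
  rw [lintegral_ofReal_min_rpow μ hM hnn (hs₀.trans hs₀a) hκ, mul_assoc, ENNReal.ofReal_mul hκ.le]
  gcongr
  calc ENNReal.ofReal (c * (log a - log s₀))
      = ∫⁻ t in Ioo s₀ a, ENNReal.ofReal (c * t⁻¹) :=
        (setLIntegral_Ioo_ofReal_mul_inv hs₀ hs₀a.le hc).symm
    _ ≤ ∫⁻ t in Ioo s₀ a, μ {ω | t < M ω} * ENNReal.ofReal (t ^ (κ - 1)) := by
        refine setLIntegral_mono' measurableSet_Ioo fun t ht => ?_
        have ht0 : 0 < t := hs₀.trans ht.1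
        rw [← rpow_neg_mul_rpow_sub_one ht0 κ, ← mul_assoc,
          ENNReal.ofReal_mul (by positivity)]
        gcongr
        exact htail t ht.1.le
    _ ≤ ∫⁻ t in Ioo 0 a, μ {ω | t < M ω} * ENNReal.ofReal (t ^ (κ - 1)) :=
        lintegral_mono_set (Ioo_subset_Ioo_left hs₀.le)

lemma lintegral_ofReal_max_sub_rpow_le (hM : AEMeasurable M μ) {κ p C s₀ a : ℝ} (hp : 0 < p)
    (hpκ : p < κ) (hC : 0 ≤ C) (ha : 0 < a) (hs₀a : s₀ ≤ a)
    (htail : ∀ s, s₀ ≤ s → μ {ω | s < M ω} ≤ ENNReal.ofReal (C * s ^ (-κ))) :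
    ∫⁻ ω, ENNReal.ofReal (max (M ω - a) 0 ^ p) ∂μ ≤
      ENNReal.ofReal (C * (1 + p / (κ - p)) * a ^ (p - κ)) := by
  have hset : ∀ t ∈ Ioi (0 : ℝ), {ω | t < max (M ω - a) 0} = {ω | a + t < M ω} :=
    fun t (ht : 0 < t) => by
      ext ω
      show t < max (M ω - a) 0 ↔ a + t < M ω
      rw [lt_max_iff, lt_sub_iff_add_lt', or_iff_left ht.le.not_gt]
  have hnear : ∫⁻ t in Ioc 0 a, μ {ω | a + t < M ω} * ENNReal.ofReal (t ^ (p - 1)) ≤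
      ENNReal.ofReal (C * a ^ (-κ) * (a ^ p / p)) :=
    calc ∫⁻ t in Ioc 0 a, μ {ω | a + t < M ω} * ENNReal.ofReal (t ^ (p - 1))
        ≤ ∫⁻ t in Ioc 0 a, ENNReal.ofReal (C * a ^ (-κ)) * ENNReal.ofReal (t ^ (p - 1)) := by
          refine setLIntegral_mono' measurableSet_Ioc fun t ht => ?_
          gcongr
          refine (htail (a + t) (by linarith [ht.1])).trans (ENNReal.ofReal_le_ofReal ?_)
          exact mul_le_mul_of_nonneg_left
            (rpow_le_rpow_of_nonpos ha (by linarith [ht.1]) (by linarith)) hC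
      _ = ENNReal.ofReal (C * a ^ (-κ) * (a ^ p / p)) := by
          rw [lintegral_const_mul' _ _ ENNReal.ofReal_ne_top,
            setLIntegral_Ioc_ofReal_rpow ha.le (by linarith), sub_add_cancel,
            ← ENNReal.ofReal_mul (by positivity)]
  have hfar : ∫⁻ t in Ioi a, μ {ω | a + t < M ω} * ENNReal.ofReal (t ^ (p - 1)) ≤
      ENNReal.ofReal (C * (a ^ (p - κ) / (κ - p))) :=
    calc ∫⁻ t in Ioi a, μ {ω | a + t < M ω} * ENNReal.ofReal (t ^ (p - 1))
        ≤ ∫⁻ t in Ioi a, ENNReal.ofReal C * ENNReal.ofReal (t ^ (p - κ - 1)) := by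
          refine setLIntegral_mono' measurableSet_Ioi fun t (ht : a < t) => ?_
          have ht0 : 0 < t := ha.trans ht
          calc μ {ω | a + t < M ω} * ENNReal.ofReal (t ^ (p - 1))
              ≤ ENNReal.ofReal (C * t ^ (-κ)) * ENNReal.ofReal (t ^ (p - 1)) := by
                gcongr
                refine (htail (a + t) (by linarith)).trans (ENNReal.ofReal_le_ofReal ?_)
                exact mul_le_mul_of_nonneg_left
                  (rpow_le_rpow_of_nonpos ht0 (by linarith) (by linarith)) hC
            _ = ENNReal.ofReal C * ENNReal.ofReal (t ^ (p - κ - 1)) := by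
                rw [← ENNReal.ofReal_mul (by positivity), mul_assoc, ← rpow_add ht0,
                  ENNReal.ofReal_mul hC]
                ring_nf
      _ = ENNReal.ofReal (C * (a ^ (p - κ) / (κ - p))) := by
          rw [lintegral_const_mul' _ _ ENNReal.ofReal_ne_top,
            setLIntegral_Ioi_ofReal_rpow ha (by linarith), ← ENNReal.ofReal_mul hC]
          congr 2
          rw [sub_add_cancel, neg_div, ← div_neg, neg_sub]
  rw [lintegral_rpow_eq_lintegral_meas_lt_mul μ (f := fun ω => max (M ω - a) 0)
      (ae_of_all _ fun ω => le_max_right _ _) (by fun_prop) hp,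
    setLIntegral_congr_fun measurableSet_Ioi fun t ht => by rw [hset t ht],
    ← Ioc_union_Ioi_eq_Ioi ha.le, lintegral_union measurableSet_Ioi (Ioc_disjoint_Ioi le_rfl)]
  calc _ ≤ ENNReal.ofReal p * (ENNReal.ofReal (C * a ^ (-κ) * (a ^ p / p)) +
        ENNReal.ofReal (C * (a ^ (p - κ) / (κ - p)))) := by
        gcongr
    _ = ENNReal.ofReal (C * (1 + p / (κ - p)) * a ^ (p - κ)) := by
        have hκp : 0 < κ - p := sub_pos.2 hpκ
        rw [← ENNReal.ofReal_add (by positivity) (by positivity), ← ENNReal.ofReal_mul hp.le,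
          sub_eq_add_neg p κ, rpow_add ha]
        congr 1
        field_simp

lemma ofReal_le_phi (hM : AEMeasurable M μ) (hnn : 0 ≤ᵐ[μ] M) {p c s₀ a : ℝ} (hp : 0 < p)
    (hc : 0 ≤ c) (hs₀ : 0 < s₀) (hs₀a : s₀ < a)
    (htail : ∀ s, s₀ ≤ s → ENNReal.ofReal (c * s ^ (-(2 * p))) ≤ μ {ω | s < M ω}) :
    ENNReal.ofReal ((2 * a) ^ (-p) * (2 * p * c * (log a - log s₀))) ≤ phi μ M p a := by
  have ha : 0 < a := hs₀.trans hs₀a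
  calc ENNReal.ofReal ((2 * a) ^ (-p) * (2 * p * c * (log a - log s₀)))
      = ENNReal.ofReal ((2 * a) ^ (-p)) * ENNReal.ofReal (2 * p * c * (log a - log s₀)) :=
        ENNReal.ofReal_mul (by positivity)
    _ ≤ ENNReal.ofReal ((2 * a) ^ (-p)) * ∫⁻ ω, ENNReal.ofReal (min (M ω) a ^ (2 * p)) ∂μ := by
        gcongr
        exact ofReal_le_lintegral_ofReal_min_rpow μ hM hnn (by positivity) hc hs₀ hs₀a htail
    _ = ∫⁻ ω, ENNReal.ofReal ((2 * a) ^ (-p) * min (M ω) a ^ (2 * p)) ∂μ := by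
        rw [← lintegral_const_mul' _ _ ENNReal.ofReal_ne_top]
        exact lintegral_congr fun ω => (ENNReal.ofReal_mul (by positivity)).symm
    _ ≤ phi μ M p a := lintegral_mono_ae <| hnn.mono fun ω hω =>
        ENNReal.ofReal_le_ofReal (le_sq_div_add_rpow hω ha hp.le)

lemma phi_le_ofReal [IsProbabilityMeasure μ] (hM : AEMeasurable M μ) (hnn : 0 ≤ᵐ[μ] M)
    {p C s₀ a : ℝ} (hp0 : 0 < p) (hp1 : p ≤ 1) (hC : 0 ≤ C) (hs₀ : 0 < s₀) (hs₀a : s₀ < a)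
    (htail : ∀ s, s₀ ≤ s → μ {ω | s < M ω} ≤ ENNReal.ofReal (C * s ^ (-(2 * p)))) :
    phi μ M p a ≤
      ENNReal.ofReal (a ^ (-p) * (s₀ ^ (2 * p) + 2 * p * C * (log a - log s₀) + 2 * C)) := by
  have ha : 0 < a := hs₀.trans hs₀a
  have hlog : 0 ≤ log a - log s₀ := sub_nonneg.2 (log_le_log hs₀ hs₀a.le)
  calc phi μ M p a
      ≤ ∫⁻ ω, (ENNReal.ofReal (a ^ (-p) * min (M ω) a ^ (2 * p)) +
          ENNReal.ofReal (max (M ω - a) 0 ^ p)) ∂μ :=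
        lintegral_mono_ae <| hnn.mono fun ω hω => by
          rw [← ENNReal.ofReal_add (mul_nonneg (rpow_nonneg ha.le _)
            (rpow_nonneg (le_min hω ha.le) _)) (rpow_nonneg (le_max_right _ _) _)]
          exact ENNReal.ofReal_le_ofReal (sq_div_add_rpow_le hω ha hp0.le hp1)
    _ = ENNReal.ofReal (a ^ (-p)) * ∫⁻ ω, ENNReal.ofReal (min (M ω) a ^ (2 * p)) ∂μ +
          ∫⁻ ω, ENNReal.ofReal (max (M ω - a) 0 ^ p) ∂μ := by
        rw [lintegral_add_left' (by fun_prop), ← lintegral_const_mul' _ _ ENNReal.ofReal_ne_top]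
        congr 1
        exact lintegral_congr fun ω => ENNReal.ofReal_mul (by positivity)
    _ ≤ ENNReal.ofReal (a ^ (-p)) * ENNReal.ofReal (s₀ ^ (2 * p) + 2 * p * C * (log a - log s₀)) +
          ENNReal.ofReal (C * (1 + p / (2 * p - p)) * a ^ (p - 2 * p)) := by
        gcongr
        · exact lintegral_ofReal_min_rpow_le μ hM hnn (by positivity) hC hs₀ hs₀a htail
        · exact lintegral_ofReal_max_sub_rpow_le μ hM hp0 (by linarith) hC ha hs₀a.le htail
    _ = ENNReal.ofReal (a ^ (-p) * (s₀ ^ (2 * p) + 2 * p * C * (log a - log s₀) + 2 * C)) := by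
        rw [show 2 * p - p = p by ring, show p - 2 * p = -p by ring, div_self hp0.ne',
          ← ENNReal.ofReal_mul (by positivity), ← ENNReal.ofReal_add (by positivity)
          (by positivity)]
        ring_nf

end LayerCake

theorem stmt_8 {Ω : Type*} [MeasurableSpace Ω] (μ : Measure Ω)
    [IsProbabilityMeasure μ]
    (M : Ω → ℝ) (hmeas : Measurable M) (hnn : ∀ ω, 0 ≤ M ω)
    (κ : ℝ) (hκ1 : 1 < κ) (hκ2 : κ ≤ 2)
    (c C s₀ : ℝ) (hc : 0 < c) (hcC : c ≤ C) (hs₀ : 0 < s₀)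
    (htail : ∀ s : ℝ, s₀ ≤ s →
      ENNReal.ofReal (c * s ^ (-κ)) ≤ μ {ω | s < M ω} ∧
      μ {ω | s < M ω} ≤ ENNReal.ofReal (C * s ^ (-κ)))
    (p : ℝ) (hp : p = κ / 2) :
    ∃ c' C' a₀ : ℝ, 0 < c' ∧ c' ≤ C' ∧ 1 < a₀ ∧
      ∀ a : ℝ, a₀ ≤ a →
        ENNReal.ofReal (c' * a ^ (p - κ) * Real.log a) ≤
          ∫⁻ ω, ENNReal.ofReal ((M ω ^ 2 / (a + M ω)) ^ p) ∂μ ∧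
        ∫⁻ ω, ENNReal.ofReal ((M ω ^ 2 / (a + M ω)) ^ p) ∂μ ≤
          ENNReal.ofReal (C' * a ^ (p - κ) * Real.log a) := by
  obtain rfl : κ = 2 * p := by rw [hp]; ring
  have hp0 : 0 < p := by linarith
  have hC : 0 < C := hc.trans_le hcC
  refine ⟨p * c / 2 ^ p, s₀ ^ (2 * p) + 2 * p * C * (1 + |log s₀|) + 2 * C, s₀ ^ 2 + 3,
    by positivity, ?_, by nlinarith [sq_nonneg s₀], fun a ha => ?_⟩
  · calc p * c / 2 ^ p ≤ p * c := div_le_self (by positivity) (one_le_rpow one_le_two hp0.le)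
      _ ≤ 2 * p * C * (1 + |log s₀|) := by
        nlinarith [mul_nonneg (mul_nonneg hp0.le hC.le) (abs_nonneg (log s₀))]
      _ ≤ _ := by linarith [rpow_nonneg hs₀.le (2 * p)]
  have hs₀a : s₀ < a := by nlinarith [sq_nonneg (s₀ - 1)]
  have ha0 : 0 < a := hs₀.trans hs₀a
  have hlog : 1 ≤ log a := by
    rw [le_log_iff_exp_le ha0]
    linarith [exp_one_lt_three, sq_nonneg s₀]
  have hlog_le : log a ≤ 2 * (log a - log s₀) := log_le_two_mul_log_sub_log hs₀ (by linarith)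
  have hlog_sub : log a - log s₀ ≤ (1 + |log s₀|) * log a := by
    nlinarith [mul_nonneg (abs_nonneg (log s₀)) (sub_nonneg.2 hlog), neg_le_abs (log s₀)]
  rw [show p - 2 * p = -p by ring]
  constructor
  · refine le_trans (ENNReal.ofReal_le_ofReal ?_) (ofReal_le_phi μ hmeas.aemeasurable
      (ae_of_all _ hnn) hp0 hc.le hs₀ hs₀a fun s hs => (htail s hs).1)
    rw [mul_rpow zero_le_two ha0.le, rpow_neg zero_le_two]
    calc p * c / 2 ^ p * a ^ (-p) * log a = (2 ^ p)⁻¹ * a ^ (-p) * (p * c) * log a := by ring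
      _ ≤ (2 ^ p)⁻¹ * a ^ (-p) * (p * c) * (2 * (log a - log s₀)) := by gcongr
      _ = _ := by ring
  · refine (phi_le_ofReal μ hmeas.aemeasurable (ae_of_all _ hnn) hp0 (by linarith) hC.le hs₀
      hs₀a fun s hs => (htail s hs).2).trans (ENNReal.ofReal_le_ofReal ?_)
    calc a ^ (-p) * (s₀ ^ (2 * p) + 2 * p * C * (log a - log s₀) + 2 * C)
        ≤ a ^ (-p) * ((s₀ ^ (2 * p) + 2 * p * C * (1 + |log s₀|) + 2 * C) * log a) := by
          gcongr
          nlinarith [mul_le_mul_of_nonneg_left hlog_sub (by positivity : 0 ≤ 2 * p * C),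
            rpow_nonneg hs₀.le (2 * p)]
      _ = _ := by ring
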